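/- arXiv:1812.09694 — 4 statements merged into one kernel-verified Lean document; each statement's English description precedes it below -/
import Mathlib

section
/- Let f : [0,∞) × [0,1] → ℝ be continuous with continuous partial derivative ∂f/∂t. Define u(t,x) = ∫₀ᵗ e^{t−z} ( f(z,x) − 3x ∫₀¹ s f(z,s) ds ) dz − 3x ∫₀¹ s f(t,s) ds. Then u has a continuous partial derivative ∂u/∂t and satisfies, for all t ≥ 0 and x ∈ [0,1], the degenerate integro-differential equation ∂u/∂t(t,x) − 3 ∫₀¹ x s ∂u/∂t(t,s) ds = u(t,x) + f(t,x), together with the initial condition u(0,x) − 3 ∫₀¹ x s u(0,s) ds = 0 for all x ∈ [0,1]. -/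
set_option maxHeartbeats 1000000

open MeasureTheory intervalIntegral Set

private lemma fubini_aux (k : ℝ → ℝ → ℝ) (hk : Continuous fun p : ℝ × ℝ => k p.1 p.2)
    {t : ℝ} (ht : 0 ≤ t) :
    (∫ s in (0:ℝ)..1, ∫ z in (0:ℝ)..t, k z s) = ∫ z in (0:ℝ)..t, ∫ s in (0:ℝ)..1, k z s := by
  have h01 : (0:ℝ) ≤ 1 := zero_le_one
  simp_rw [intervalIntegral.integral_of_le h01, intervalIntegral.integral_of_le ht]
  apply MeasureTheory.integral_integral_swap
  rw [Measure.prod_restrict]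
  have hcont : Continuous fun p : ℝ × ℝ => k p.2 p.1 :=
    hk.comp (continuous_snd.prodMk continuous_fst)
  have h1 : IntegrableOn (fun p : ℝ × ℝ => k p.2 p.1) (Icc 0 1 ×ˢ Icc 0 t)
      ((volume : Measure ℝ).prod volume) :=
    hcont.continuousOn.integrableOn_compact (isCompact_Icc.prod isCompact_Icc)
  exact h1.mono_set (Set.prod_mono Ioc_subset_Icc_self Ioc_subset_Icc_self)



/-- The explicit solution of Example 2:
`u(t,x) = ∫₀ᵗ e^{t−z} ( f(z,x) − 3x ∫₀¹ s f(z,s) ds ) dz − 3x ∫₀¹ s f(t,s) ds`. -/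
noncomputable def uSol (f : ℝ → ℝ → ℝ) (t x : ℝ) : ℝ :=
  (∫ z in (0:ℝ)..t,
      Real.exp (t - z) * (f z x - 3 * x * ∫ s in (0:ℝ)..1, s * f z s))
    - 3 * x * ∫ s in (0:ℝ)..1, s * f t s

/-- If `f` is continuous on `[0,∞) × [0,1]` with continuous partial derivative `∂f/∂t`,
then `u = uSol f` has a continuous partial derivative `∂u/∂t` and satisfies the degenerate
integro-differential equation
`∂u/∂t(t,x) − 3 ∫₀¹ x s ∂u/∂t(t,s) ds = u(t,x) + f(t,x)` for `t ≥ 0`, `x ∈ [0,1]`,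
together with the initial condition `u(0,x) − 3 ∫₀¹ x s u(0,s) ds = 0` for `x ∈ [0,1]`. -/
theorem stmt_4 (f ft : ℝ → ℝ → ℝ)
    (hf : ContinuousOn (fun p : ℝ × ℝ => f p.1 p.2) (Set.Ici 0 ×ˢ Set.Icc 0 1))
    (hft : ∀ x ∈ Set.Icc (0:ℝ) 1, ∀ t ∈ Set.Ici (0:ℝ),
      HasDerivWithinAt (fun τ => f τ x) (ft t x) (Set.Ici 0) t)
    (hftc : ContinuousOn (fun p : ℝ × ℝ => ft p.1 p.2) (Set.Ici 0 ×ˢ Set.Icc 0 1)) :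
    ∃ ut : ℝ → ℝ → ℝ,
      ContinuousOn (fun p : ℝ × ℝ => ut p.1 p.2) (Set.Ici 0 ×ˢ Set.Icc 0 1) ∧
      (∀ x ∈ Set.Icc (0:ℝ) 1, ∀ t ∈ Set.Ici (0:ℝ),
        HasDerivWithinAt (fun τ => uSol f τ x) (ut t x) (Set.Ici 0) t) ∧
      (∀ t ∈ Set.Ici (0:ℝ), ∀ x ∈ Set.Icc (0:ℝ) 1,
        ut t x - 3 * x * ∫ s in (0:ℝ)..1, s * ut t s = uSol f t x + f t x) ∧
      (∀ x ∈ Set.Icc (0:ℝ) 1,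
        uSol f 0 x - 3 * x * ∫ s in (0:ℝ)..1, s * uSol f 0 s = 0) := by
  classical
  have hScl : IsClosed (Set.Ici (0:ℝ) ×ˢ Set.Icc (0:ℝ) 1) := isClosed_Ici.prod isClosed_Icc
  obtain ⟨fc, hfc0⟩ := ContinuousMap.exists_restrict_eq (Y := ℝ) hScl
    ⟨_, continuousOn_iff_continuous_restrict.mp hf⟩
  obtain ⟨gc, hgc0⟩ := ContinuousMap.exists_restrict_eq (Y := ℝ) hScl
    ⟨_, continuousOn_iff_continuous_restrict.mp hftc⟩
  have hfceq : ∀ t, 0 ≤ t → ∀ x ∈ Set.Icc (0:ℝ) 1, fc (t, x) = f t x := by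
    intro t ht x hx
    simpa using DFunLike.congr_fun hfc0 ⟨(t, x), Set.mem_prod.mpr ⟨ht, hx⟩⟩
  have hgceq : ∀ t, 0 ≤ t → ∀ x ∈ Set.Icc (0:ℝ) 1, gc (t, x) = ft t x := by
    intro t ht x hx
    simpa using DFunLike.congr_fun hgc0 ⟨(t, x), Set.mem_prod.mpr ⟨ht, hx⟩⟩
  clear hfc0 hgc0
  -- the basic functions
  obtain ⟨F, hFdef⟩ : ∃ F : ℝ → ℝ, F = fun t => ∫ s in (0:ℝ)..1, s * fc (t, s) := ⟨_, rfl⟩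
  obtain ⟨G, hGdef⟩ : ∃ G : ℝ → ℝ, G = fun t => ∫ s in (0:ℝ)..1, s * gc (t, s) := ⟨_, rfl⟩
  have hFcont : Continuous F := by
    simp only [hFdef]
    exact intervalIntegral.continuous_parametric_intervalIntegral_of_continuous'
      (μ := volume) (f := fun t s => s * fc (t, s))
      (continuous_snd.mul (fc.continuous.comp (continuous_fst.prodMk continuous_snd))) 0 1
  have hGcont : Continuous G := by
    simp only [hGdef]
    exact intervalIntegral.continuous_parametric_intervalIntegral_of_continuous'
      (μ := volume) (f := fun t s => s * gc (t, s))
      (continuous_snd.mul (gc.continuous.comp (continuous_fst.prodMk continuous_snd))) 0 1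
  obtain ⟨P, hPdef⟩ : ∃ P : ℝ → ℝ → ℝ,
      P = fun t x => ∫ z in (0:ℝ)..t, Real.exp (-z) * (fc (z, x) - 3 * x * F z) := ⟨_, rfl⟩
  have hkcont : Continuous fun q : ℝ × ℝ => Real.exp (-q.2) * (fc (q.2, q.1) - 3 * q.1 * F q.2) :=
    (Real.continuous_exp.comp continuous_snd.neg).mul
      ((fc.continuous.comp (continuous_snd.prodMk continuous_fst)).sub
        ((continuous_const.mul continuous_fst).mul (hFcont.comp continuous_snd)))
  have hPcont : Continuous fun p : ℝ × ℝ => P p.1 p.2 := by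
    simp only [hPdef]
    have h := intervalIntegral.continuous_parametric_primitive_of_continuous
      (μ := volume) (a₀ := (0:ℝ))
      (f := fun x z => Real.exp (-z) * (fc (z, x) - 3 * x * F z)) hkcont
    have h3 := h.comp (continuous_swap : Continuous (Prod.swap : ℝ × ℝ → ℝ × ℝ))
    simp only [Function.comp_def, Prod.fst_swap, Prod.snd_swap] at h3
    exact h3
  -- F has derivative G on Ici 0
  have hfcft : ∀ s ∈ Set.Icc (0:ℝ) 1, ∀ z, 0 ≤ z →
      HasDerivWithinAt (fun τ => fc (τ, s)) (gc (z, s)) (Set.Ici 0) z := by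
    intro s hs z hz
    have h1 := (hft s hs z hz).congr
      (fun τ hτ => hfceq τ hτ s hs) (hfceq z hz s hs)
    rw [← hgceq z hz s hs] at h1
    exact h1
  have hFTC2 : ∀ τ, 0 ≤ τ → ∀ s ∈ Set.Icc (0:ℝ) 1,
      (∫ z in (0:ℝ)..τ, gc (z, s)) = fc (τ, s) - fc (0, s) := by
    intro τ hτ s hs
    apply intervalIntegral.integral_eq_sub_of_hasDeriv_right_of_le hτ
    · exact (fc.continuous.comp (continuous_id.prodMk continuous_const)).continuousOn
    · intro z hz
      exact ((hfcft s hs z hz.1.le).hasDerivAt (Ici_mem_nhds hz.1)).hasDerivWithinAt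
    · exact (gc.continuous.comp (continuous_id.prodMk continuous_const)).intervalIntegrable _ _
  have hFeq : ∀ τ, 0 ≤ τ → F τ = F 0 + ∫ z in (0:ℝ)..τ, G z := by
    intro τ hτ
    have h1 : F τ - F 0 = ∫ s in (0:ℝ)..1, (s * fc (τ, s) - s * fc (0, s)) := by
      simp only [hFdef]
      exact (intervalIntegral.integral_sub
        ((continuous_id.mul (fc.continuous.comp (continuous_const.prodMk continuous_id))).intervalIntegrable _ _)
        ((continuous_id.mul (fc.continuous.comp (continuous_const.prodMk continuous_id))).intervalIntegrable _ _)).symm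
    have h2 : (∫ s in (0:ℝ)..1, (s * fc (τ, s) - s * fc (0, s)))
        = ∫ s in (0:ℝ)..1, ∫ z in (0:ℝ)..τ, s * gc (z, s) := by
      apply intervalIntegral.integral_congr
      intro s hs
      rw [Set.uIcc_of_le zero_le_one] at hs
      beta_reduce
      rw [intervalIntegral.integral_const_mul, hFTC2 τ hτ s hs]
      ring
    have h3 := fubini_aux (fun z s => s * gc (z, s))
      (continuous_snd.mul (gc.continuous.comp (continuous_fst.prodMk continuous_snd))) hτ
    rw [h2, h3] at h1
    simp only [hGdef]
    linarith [h1]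
  have hFd : ∀ t, 0 ≤ t → HasDerivWithinAt F (G t) (Set.Ici 0) t := by
    intro t ht
    have hprim : HasDerivAt (fun τ : ℝ => F 0 + ∫ z in (0:ℝ)..τ, G z) (G t) t :=
      ((hGcont.integral_hasStrictDerivAt 0 t).hasDerivAt).const_add (F 0)
    exact hprim.hasDerivWithinAt.congr (fun τ hτ => hFeq τ hτ) (hFeq t ht)
  -- congruence between uSol f and the fc-version
  have hinner : ∀ z, 0 ≤ z → (∫ s in (0:ℝ)..1, s * f z s) = F z := by
    intro z hz
    simp only [hFdef]
    apply intervalIntegral.integral_congr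
    intro s hs
    rw [Set.uIcc_of_le zero_le_one] at hs
    beta_reduce
    rw [hfceq z hz s hs]
  have hUcongr : ∀ x ∈ Set.Icc (0:ℝ) 1, ∀ τ, 0 ≤ τ →
      uSol f τ x = Real.exp τ * P τ x - 3 * x * F τ := by
    intro x hx τ hτ
    have h1 : (∫ z in (0:ℝ)..τ,
        Real.exp (τ - z) * (f z x - 3 * x * ∫ s in (0:ℝ)..1, s * f z s))
        = ∫ z in (0:ℝ)..τ, Real.exp τ * (Real.exp (-z) * (fc (z, x) - 3 * x * F z)) := by
      apply intervalIntegral.integral_congr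
      intro z hz
      rw [Set.uIcc_of_le hτ] at hz
      beta_reduce
      rw [hinner z hz.1, ← hfceq z hz.1 x hx, sub_eq_add_neg, Real.exp_add]
      ring
    rw [uSol, h1, intervalIntegral.integral_const_mul, hinner τ hτ]
    simp only [hPdef]
  -- the candidate derivative
  refine ⟨fun t x => Real.exp t * P t x + (fc (t, x) - 3 * x * F t) - 3 * x * G t,
    ?_, ?_, ?_, ?_⟩
  · -- continuity
    apply Continuous.continuousOn
    exact (((Real.continuous_exp.comp continuous_fst).mul hPcont).add
      ((fc.continuous.comp (continuous_fst.prodMk continuous_snd)).sub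
        ((continuous_const.mul continuous_snd).mul (hFcont.comp continuous_fst)))).sub
      ((continuous_const.mul continuous_snd).mul (hGcont.comp continuous_fst))
  · -- derivative
    intro x hx t ht
    have hkc : Continuous fun z : ℝ => Real.exp (-z) * (fc (z, x) - 3 * x * F z) :=
      (Real.continuous_exp.comp continuous_neg).mul
        ((fc.continuous.comp (continuous_id.prodMk continuous_const)).sub
          (continuous_const.mul hFcont))
    have hPd : HasDerivAt (fun τ => P τ x) (Real.exp (-t) * (fc (t, x) - 3 * x * F t)) t := by
      simp only [hPdef]
      exact (hkc.integral_hasStrictDerivAt 0 t).hasDerivAt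
    have h1 : HasDerivAt (fun τ => Real.exp τ * P τ x)
        (Real.exp t * P t x + Real.exp t * (Real.exp (-t) * (fc (t, x) - 3 * x * F t))) t :=
      (Real.hasDerivAt_exp t).mul hPd
    have h2 := h1.hasDerivWithinAt.sub (HasDerivWithinAt.const_mul (3 * x) (hFd t ht))
    have hee : Real.exp t * (Real.exp (-t) * (fc (t, x) - 3 * x * F t))
        = fc (t, x) - 3 * x * F t := by
      rw [← mul_assoc, ← Real.exp_add]
      simp
    rw [hee] at h2
    have h3 : HasDerivWithinAt (fun τ => uSol f τ x)
        (Real.exp t * P t x + (fc (t, x) - 3 * x * F t) - 3 * x * G t) (Set.Ici 0) t := by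
      apply h2.congr (fun τ hτ => hUcongr x hx τ hτ) (hUcongr x hx t ht)
    exact h3
  · -- the PDE
    intro t ht x hx
    have hPtcont : Continuous fun s : ℝ => P t s :=
      hPcont.comp (continuous_const.prodMk continuous_id)
    have hsP : (∫ s in (0:ℝ)..1, s * P t s) = 0 := by
      have h1 : ∀ s : ℝ, s * P t s
          = ∫ z in (0:ℝ)..t, s * (Real.exp (-z) * (fc (z, s) - 3 * s * F z)) := by
        intro s
        simp only [hPdef]
        rw [intervalIntegral.integral_const_mul]
      have hcont2 : Continuous fun p : ℝ × ℝ =>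
          p.2 * (Real.exp (-p.1) * (fc (p.1, p.2) - 3 * p.2 * F p.1)) :=
        continuous_snd.mul ((Real.continuous_exp.comp continuous_fst.neg).mul
          ((fc.continuous.comp (continuous_fst.prodMk continuous_snd)).sub
            ((continuous_const.mul continuous_snd).mul (hFcont.comp continuous_fst))))
      calc (∫ s in (0:ℝ)..1, s * P t s)
          = ∫ s in (0:ℝ)..1, ∫ z in (0:ℝ)..t,
              s * (Real.exp (-z) * (fc (z, s) - 3 * s * F z)) :=
            intervalIntegral.integral_congr (fun s _ => h1 s)
        _ = ∫ z in (0:ℝ)..t, ∫ s in (0:ℝ)..1,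
              s * (Real.exp (-z) * (fc (z, s) - 3 * s * F z)) :=
            fubini_aux _ hcont2 ht
        _ = ∫ z in (0:ℝ)..t, (0:ℝ) := by
            apply intervalIntegral.integral_congr
            intro z _
            beta_reduce
            have he : ∀ s : ℝ, s * (Real.exp (-z) * (fc (z, s) - 3 * s * F z))
                = Real.exp (-z) * (s * fc (z, s)) - (3 * Real.exp (-z) * F z) * s ^ 2 := by
              intro s; ring
            have hi1 : IntervalIntegrable
                (fun s : ℝ => Real.exp (-z) * (s * fc (z, s))) volume 0 1 :=
              Continuous.intervalIntegrable (by fun_prop) _ _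
            have hi2 : IntervalIntegrable
                (fun s : ℝ => (3 * Real.exp (-z) * F z) * s ^ 2) volume 0 1 :=
              Continuous.intervalIntegrable (by fun_prop) _ _
            rw [intervalIntegral.integral_congr (fun s _ => he s),
              intervalIntegral.integral_sub hi1 hi2,
              intervalIntegral.integral_const_mul, intervalIntegral.integral_const_mul,
              integral_pow]
            simp only [hFdef]
            norm_num
            ring
        _ = 0 := by simp
    have hFt : (∫ s in (0:ℝ)..1, s * fc (t, s)) = F t := by rw [hFdef]
    have hI : (∫ s in (0:ℝ)..1,
        s * (Real.exp t * P t s + (fc (t, s) - 3 * s * F t) - 3 * s * G t)) = -G t := by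
      have he : ∀ s : ℝ, s * (Real.exp t * P t s + (fc (t, s) - 3 * s * F t) - 3 * s * G t)
          = (Real.exp t * (s * P t s) + s * fc (t, s)) - (3 * F t + 3 * G t) * s ^ 2 := by
        intro s; ring
      have hj1 : IntervalIntegrable
          (fun s : ℝ => Real.exp t * (s * P t s)) volume 0 1 :=
        Continuous.intervalIntegrable (by fun_prop) _ _
      have hj2 : IntervalIntegrable
          (fun s : ℝ => s * fc (t, s)) volume 0 1 :=
        Continuous.intervalIntegrable (by fun_prop) _ _
      have hj3 : IntervalIntegrable
          (fun s : ℝ => (3 * F t + 3 * G t) * s ^ 2) volume 0 1 :=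
        Continuous.intervalIntegrable (by fun_prop) _ _
      rw [intervalIntegral.integral_congr (fun s _ => he s),
        intervalIntegral.integral_sub (hj1.add hj2) hj3,
        intervalIntegral.integral_add hj1 hj2,
        intervalIntegral.integral_const_mul, intervalIntegral.integral_const_mul,
        hsP, hFt, integral_pow]
      norm_num
      ring
    rw [hI, hUcongr x hx t ht, ← hfceq t ht x hx]
    ring
  · -- initial condition
    intro x hx
    have h0 : ∀ y : ℝ, uSol f 0 y = -(3 * y) * ∫ s in (0:ℝ)..1, s * f 0 s := by
      intro y
      simp only [uSol, intervalIntegral.integral_same]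
      ring
    have h1 : (∫ s in (0:ℝ)..1, s * uSol f 0 s)
        = ∫ s in (0:ℝ)..1, (-(3 * ∫ u in (0:ℝ)..1, u * f 0 u)) * s ^ 2 := by
      apply intervalIntegral.integral_congr
      intro s _
      beta_reduce
      rw [h0 s]; ring
    rw [h1, intervalIntegral.integral_const_mul, integral_pow, h0 x]
    norm_num
    ring
end

section
/- Let f : [0,∞) × [0,1] → ℝ be continuous. Suppose u : [0,∞) × [0,1] → ℝ is continuous, has a continuous partial derivative ∂u/∂t, and satisfies ∂u/∂t(t,x) − 3 ∫₀¹ x s ∂u/∂t(t,s) ds = u(t,x) + f(t,x) for all t ≥ 0 and x ∈ [0,1]. Then necessarily ∫₀¹ s u(t,s) ds = − ∫₀¹ s f(t,s) ds for every t ≥ 0. In particular, the standard condition u(0,·) = 0 can hold only if ∫₀¹ s f(0,s) ds = 0, so the equation with the standard initial condition is not solvable for arbitrary continuous f. -/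
/-- Any solution `u` of the degenerate equation of Example 2,
`∂u/∂t(t,x) − 3 ∫₀¹ x s ∂u/∂t(t,s) ds = u(t,x) + f(t,x)` on `[0,∞) × [0,1]`,
necessarily satisfies `∫₀¹ s u(t,s) ds = − ∫₀¹ s f(t,s) ds` for every `t ≥ 0`.
In particular, the standard condition `u(0,·) = 0` can hold only if
`∫₀¹ s f(0,s) ds = 0`, so the equation with the standard initial condition is
not solvable for arbitrary continuous `f`. -/
theorem stmt_5 (f u ut : ℝ → ℝ → ℝ)
    (hf : ContinuousOn (fun p : ℝ × ℝ => f p.1 p.2) (Set.Ici 0 ×ˢ Set.Icc 0 1))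
    (hu : ContinuousOn (fun p : ℝ × ℝ => u p.1 p.2) (Set.Ici 0 ×ˢ Set.Icc 0 1))
    (hut : ∀ x ∈ Set.Icc (0:ℝ) 1, ∀ t ∈ Set.Ici (0:ℝ),
      HasDerivWithinAt (fun τ => u τ x) (ut t x) (Set.Ici 0) t)
    (hutc : ContinuousOn (fun p : ℝ × ℝ => ut p.1 p.2) (Set.Ici 0 ×ˢ Set.Icc 0 1))
    (heq : ∀ t ∈ Set.Ici (0:ℝ), ∀ x ∈ Set.Icc (0:ℝ) 1,
      ut t x - 3 * x * ∫ s in (0:ℝ)..1, s * ut t s = u t x + f t x) :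
    (∀ t ∈ Set.Ici (0:ℝ),
      ∫ s in (0:ℝ)..1, s * u t s = - ∫ s in (0:ℝ)..1, s * f t s) ∧
    ((∀ x ∈ Set.Icc (0:ℝ) 1, u 0 x = 0) → ∫ s in (0:ℝ)..1, s * f 0 s = 0) := by
  have main : ∀ t ∈ Set.Ici (0:ℝ),
      ∫ s in (0:ℝ)..1, s * u t s = - ∫ s in (0:ℝ)..1, s * f t s := by
    intro t ht
    -- continuity of the slices
    have hslice : ∀ (g : ℝ → ℝ → ℝ),
        ContinuousOn (fun p : ℝ × ℝ => g p.1 p.2) (Set.Ici 0 ×ˢ Set.Icc 0 1) →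
        ContinuousOn (fun s => s * g t s) (Set.Icc 0 1) := by
      intro g hg
      have h1 : ContinuousOn (fun s : ℝ => g t s) (Set.Icc 0 1) := by
        have := hg.comp (Continuous.continuousOn (by continuity :
            Continuous fun s : ℝ => ((t, s) : ℝ × ℝ)))
            (fun s hs => Set.mk_mem_prod ht hs)
        exact this
      exact continuousOn_id.mul h1
    have hIu : IntervalIntegrable (fun s => s * u t s) MeasureTheory.volume 0 1 :=
      (hslice u hu).intervalIntegrable_of_Icc zero_le_one
    have hIut : IntervalIntegrable (fun s => s * ut t s) MeasureTheory.volume 0 1 :=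
      (hslice ut hutc).intervalIntegrable_of_Icc zero_le_one
    set C : ℝ := ∫ s in (0:ℝ)..1, s * ut t s with hC
    -- f t x on [0,1] equals ut t x - 3 x C - u t x
    have hfx : ∀ x ∈ Set.Icc (0:ℝ) 1, f t x = ut t x - 3 * x * C - u t x := by
      intro x hx
      have := heq t ht x hx
      linarith
    have hcongr : (∫ s in (0:ℝ)..1, s * f t s)
        = ∫ s in (0:ℝ)..1, (s * ut t s - 3 * s ^ 2 * C - s * u t s) := by
      apply intervalIntegral.integral_congr
      intro x hx
      rw [Set.uIcc_of_le zero_le_one] at hx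
      simp only
      rw [hfx x hx]; ring
    have hIq : IntervalIntegrable (fun s : ℝ => 3 * s ^ 2 * C)
        MeasureTheory.volume 0 1 := by
      apply Continuous.intervalIntegrable; continuity
    have hq : (∫ s in (0:ℝ)..1, 3 * s ^ 2 * C) = C := by
      have : (∫ s in (0:ℝ)..1, s ^ 2) = 1 / 3 := by
        norm_num [integral_pow]
      rw [show (fun s : ℝ => 3 * s ^ 2 * C) = fun s : ℝ => (s ^ 2) * (3 * C) by
        funext s; ring]
      rw [intervalIntegral.integral_mul_const, this]; ring
    have : (∫ s in (0:ℝ)..1, s * f t s) = C - C - ∫ s in (0:ℝ)..1, s * u t s := by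
      rw [hcongr, intervalIntegral.integral_sub (hIut.sub hIq) hIu,
        intervalIntegral.integral_sub hIut hIq, hq]
    rw [this]; ring
  refine ⟨main, fun h0 => ?_⟩
  have h := main 0 (Set.mem_Ici.mpr le_rfl)
  have hz : (∫ s in (0:ℝ)..1, s * u 0 s) = 0 := by
    have : (∫ s in (0:ℝ)..1, s * u 0 s) = ∫ s in (0:ℝ)..1, (0:ℝ) := by
      apply intervalIntegral.integral_congr
      intro x hx
      rw [Set.uIcc_of_le zero_le_one] at hx
      simp [h0 x hx]
    rw [this]; simp
  rw [hz] at h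
  linarith
end

section
/- Let f : [0,∞) × [0,1] → ℝ be continuous with continuous partial derivative ∂f/∂t. Suppose u : [0,∞) × [0,1] → ℝ is continuous, has a continuous partial derivative ∂u/∂t, satisfies ∂u/∂t(t,x) − 3 ∫₀¹ x s ∂u/∂t(t,s) ds = u(t,x) + f(t,x) for all t ≥ 0, x ∈ [0,1], and satisfies u(0,x) − 3 ∫₀¹ x s u(0,s) ds = 0 for all x ∈ [0,1]. Then u is uniquely determined: u(t,x) = ∫₀ᵗ e^{t−z} ( f(z,x) − 3x ∫₀¹ s f(z,s) ds ) dz − 3x ∫₀¹ s f(t,s) ds for all t ≥ 0, x ∈ [0,1]. -/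
open Set MeasureTheory intervalIntegral Real Function
open scoped Interval

section ParametricIntegral

variable {E : Type*} [NormedAddCommGroup E] [NormedSpace ℝ E] {a b : ℝ}

theorem continuousOn_intervalIntegral_of_continuousOn {X : Type*} [TopologicalSpace X]
    {F : X → ℝ → E} {T : Set X} (hF : ContinuousOn (uncurry F) (T ×ˢ [[a, b]])) :
    ContinuousOn (fun t => ∫ x in a..b, F t x) T := by
  -- Clamping the integration variable to `[[a, b]]` extends `F` continuously to `T × ℝ`.
  let G : T → ℝ → E := fun t x => F t (projIcc (min a b) (max a b) min_le_max x)
  have hG : Continuous (uncurry G) :=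
    hF.comp_continuous (f := fun p : T × ℝ => ((p.1 : X), (projIcc _ _ min_le_max p.2 : ℝ)))
      (by fun_prop) fun p => ⟨p.1.2, (projIcc _ _ min_le_max p.2).2⟩
  rw [continuousOn_iff_continuous_domRestrict]
  refine (continuous_parametric_intervalIntegral_of_continuous' hG a b).congr fun t =>
    integral_congr fun x hx => ?_
  simp [G, projIcc_of_mem _ hx]

theorem hasDerivAt_intervalIntegral_of_continuousOn {F F' : ℝ → ℝ → E} {T : Set ℝ}
    (hT : IsOpen T) (hF : ContinuousOn (uncurry F) (T ×ˢ [[a, b]]))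
    (hF' : ContinuousOn (uncurry F') (T ×ˢ [[a, b]]))
    (hd : ∀ t ∈ T, ∀ x ∈ [[a, b]], HasDerivAt (F · x) (F' t x) t) {t₀ : ℝ} (ht₀ : t₀ ∈ T) :
    HasDerivAt (fun t => ∫ x in a..b, F t x) (∫ x in a..b, F' t₀ x) t₀ := by
  obtain ⟨δ, hδ, hball⟩ := Metric.isOpen_iff.1 hT t₀ ht₀
  have hK : Metric.closedBall t₀ (δ / 2) ⊆ T :=
    (Metric.closedBall_subset_ball (half_lt_self hδ)).trans hball
  obtain ⟨C, hC⟩ := ((isCompact_closedBall t₀ (δ / 2)).prod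
    isCompact_uIcc).exists_bound_of_continuousOn (hF'.mono (prod_mono hK le_rfl))
  have hmeas : ∀ {G : ℝ → ℝ → E}, ContinuousOn (uncurry G) (T ×ˢ [[a, b]]) → ∀ t ∈ T,
      AEStronglyMeasurable (G t) (volume.restrict (Ι a b)) := fun hG t ht =>
    ((hG.uncurry_left t ht).mono uIoc_subset_uIcc).aestronglyMeasurable measurableSet_uIoc
  refine (hasDerivAt_integral_of_dominated_loc_of_deriv_le (bound := fun _ => C)
    (Metric.closedBall_mem_nhds t₀ (half_pos hδ)) ?_ (hF.uncurry_left t₀ ht₀).intervalIntegrable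
    (hmeas hF' t₀ ht₀) ?_ intervalIntegrable_const ?_).2
  · filter_upwards [hT.mem_nhds ht₀] with t ht using hmeas hF t ht
  · exact ae_of_all _ fun x hx t ht => hC (t, x) ⟨ht, uIoc_subset_uIcc hx⟩
  · exact ae_of_all _ fun x hx t ht => hd t (hK ht) x (uIoc_subset_uIcc hx)

end ParametricIntegral

theorem eq_exp_mul_add_integral_of_hasDerivAt {v g : ℝ → ℝ} {t : ℝ} (ht : 0 ≤ t)
    (hv : ContinuousOn v (Icc 0 t)) (hg : ContinuousOn g (Icc 0 t))
    (hd : ∀ z ∈ Ioo 0 t, HasDerivAt v (v z + g z) z) :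
    v t = exp t * v 0 + ∫ z in (0:ℝ)..t, exp (t - z) * g z := by
  have hexp : Continuous fun z => exp (-z) := by fun_prop
  have hFTC : ∫ z in (0:ℝ)..t, exp (-z) * g z = exp (-t) * v t - exp (-0) * v 0 := by
    refine integral_eq_sub_of_hasDeriv_right_of_le ht (hexp.continuousOn.mul hv)
      (fun z hz => ?_) ((hexp.continuousOn.mul hg).intervalIntegrable_of_Icc ht)
    have := (hasDerivAt_neg z).exp.mul (hd z hz)
    exact (this.congr_deriv (by ring)).hasDerivWithinAt
  have hshift : ∫ z in (0:ℝ)..t, exp (t - z) * g z = exp t * ∫ z in (0:ℝ)..t, exp (-z) * g z := by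
    rw [← intervalIntegral.integral_const_mul]
    congr 1 with z
    rw [sub_eq_add_neg, exp_add, mul_assoc]
  rw [hshift, hFTC, mul_sub, ← mul_assoc, ← exp_add, add_neg_cancel, neg_zero, exp_zero]
  ring

noncomputable def firstMoment (F : ℝ → ℝ → ℝ) (t : ℝ) : ℝ :=
  ∫ s in (0:ℝ)..1, s * F t s

section FirstMoment

variable {F F' : ℝ → ℝ → ℝ} {T : Set ℝ}

theorem ContinuousOn.uncurry_id_mul (hF : ContinuousOn (uncurry F) (T ×ˢ Icc 0 1)) :
    ContinuousOn (uncurry fun t s => s * F t s) (T ×ˢ [[0, 1]]) := by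
  rw [uIcc_of_le zero_le_one]
  exact continuous_snd.continuousOn.mul hF

theorem intervalIntegrable_id_mul (hF : ContinuousOn (uncurry F) (T ×ˢ Icc 0 1)) {t : ℝ}
    (ht : t ∈ T) : IntervalIntegrable (fun s => s * F t s) volume 0 1 :=
  (hF.uncurry_id_mul.uncurry_left t ht).intervalIntegrable

theorem continuousOn_firstMoment (hF : ContinuousOn (uncurry F) (T ×ˢ Icc 0 1)) :
    ContinuousOn (firstMoment F) T :=
  continuousOn_intervalIntegral_of_continuousOn hF.uncurry_id_mul

theorem hasDerivAt_firstMoment (hT : IsOpen T) (hF : ContinuousOn (uncurry F) (T ×ˢ Icc 0 1))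
    (hF' : ContinuousOn (uncurry F') (T ×ˢ Icc 0 1))
    (hd : ∀ t ∈ T, ∀ x ∈ Icc (0:ℝ) 1, HasDerivAt (F · x) (F' t x) t) {t : ℝ} (ht : t ∈ T) :
    HasDerivAt (firstMoment F) (firstMoment F' t) t :=
  hasDerivAt_intervalIntegral_of_continuousOn hT hF.uncurry_id_mul hF'.uncurry_id_mul
    (fun t ht x hx => (hd t ht x (by rwa [uIcc_of_le zero_le_one] at hx)).const_mul x) ht

end FirstMoment

theorem integral_mul_eq_zero_of_eq_sub_moment {v w : ℝ → ℝ}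
    (hv : IntervalIntegrable (fun s => s * v s) volume 0 1)
    (h : ∀ x ∈ Icc (0:ℝ) 1, v x - 3 * x * ∫ s in (0:ℝ)..1, s * v s = w x) :
    ∫ s in (0:ℝ)..1, s * w s = 0 := by
  set c := ∫ s in (0:ℝ)..1, s * v s
  calc ∫ s in (0:ℝ)..1, s * w s = ∫ s in (0:ℝ)..1, (s * v s - 3 * c * s ^ 2) := by
        refine integral_congr fun s hs => ?_
        rw [uIcc_of_le zero_le_one] at hs
        simp only [← h s hs]
        ring
    _ = c - 3 * c * (1 / 3) := by
        rw [integral_sub hv (by apply Continuous.intervalIntegrable; fun_prop),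
          intervalIntegral.integral_const_mul, integral_pow]
        norm_num [c]
    _ = 0 := by ring

theorem stmt_6_general (f u ut : ℝ → ℝ → ℝ)
    (hf : ContinuousOn (fun p : ℝ × ℝ => f p.1 p.2) (Set.Ici 0 ×ˢ Set.Icc 0 1))
    (hu : ContinuousOn (fun p : ℝ × ℝ => u p.1 p.2) (Set.Ici 0 ×ˢ Set.Icc 0 1))
    (hut : ∀ x ∈ Set.Icc (0:ℝ) 1, ∀ t ∈ Set.Ici (0:ℝ),
      HasDerivWithinAt (fun τ => u τ x) (ut t x) (Set.Ici 0) t)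
    (hutc : ContinuousOn (fun p : ℝ × ℝ => ut p.1 p.2) (Set.Ici 0 ×ˢ Set.Icc 0 1))
    (heq : ∀ t ∈ Set.Ici (0:ℝ), ∀ x ∈ Set.Icc (0:ℝ) 1,
      ut t x - 3 * x * ∫ s in (0:ℝ)..1, s * ut t s = u t x + f t x)
    (hinit : ∀ x ∈ Set.Icc (0:ℝ) 1,
      u 0 x - 3 * x * ∫ s in (0:ℝ)..1, s * u 0 s = 0) :
    ∀ t ∈ Set.Ici (0:ℝ), ∀ x ∈ Set.Icc (0:ℝ) 1, u t x = uSol f t x := by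
  have hmoment : ∀ t ∈ Ici (0:ℝ), firstMoment u t = -firstMoment f t := fun t ht => by
    have h := integral_mul_eq_zero_of_eq_sub_moment (intervalIntegrable_id_mul hutc ht) (heq t ht)
    simp only [mul_add] at h
    rw [integral_add (intervalIntegrable_id_mul hu ht) (intervalIntegrable_id_mul hf ht)] at h
    exact eq_neg_of_add_eq_zero_left h
  have hpos : Ioi (0:ℝ) ×ˢ Icc (0:ℝ) 1 ⊆ Ici 0 ×ˢ Icc 0 1 := prod_mono Ioi_subset_Ici_self le_rfl
  have hu' : ∀ x ∈ Icc (0:ℝ) 1, ∀ z ∈ Ioi (0:ℝ), HasDerivAt (u · x) (ut z x) z :=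
    fun x hx z hz => (hut x hx z (mem_Ici.2 hz.le)).hasDerivAt (Ici_mem_nhds hz)
  have hA' : ∀ z ∈ Ioi (0:ℝ), HasDerivAt (firstMoment u) (firstMoment ut z) z :=
    fun _ => hasDerivAt_firstMoment isOpen_Ioi (hu.mono hpos) (hutc.mono hpos)
      fun z hz x hx => hu' x hx z hz
  intro t ht x hx
  have hv : ContinuousOn (fun τ => u τ x - 3 * x * firstMoment u τ) (Ici 0) :=
    (hu.uncurry_right x hx).sub (continuousOn_const.mul (continuousOn_firstMoment hu))
  have hg : ContinuousOn (fun τ => f τ x - 3 * x * firstMoment f τ) (Ici 0) :=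
    (hf.uncurry_right x hx).sub (continuousOn_const.mul (continuousOn_firstMoment hf))
  have hvt := eq_exp_mul_add_integral_of_hasDerivAt ht (hv.mono Icc_subset_Ici_self)
    (hg.mono Icc_subset_Ici_self) fun z hz => by
      refine ((hu' x hx z hz.1).sub ((hA' z hz.1).const_mul (3 * x))).congr_deriv ?_
      rw [firstMoment, heq z hz.1.le x hx, hmoment z hz.1.le]
      ring
  have hAt := hmoment t ht
  simp only [firstMoment] at hvt hAt
  rw [uSol]
  linear_combination hvt + exp t * hinit x hx + 3 * x * hAt

/-- Uniqueness in Example 2: if `f` is continuous on `[0,∞) × [0,1]` with continuous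
partial derivative `∂f/∂t`, and `u` is continuous, has a continuous partial derivative
`∂u/∂t`, satisfies `∂u/∂t(t,x) − 3 ∫₀¹ x s ∂u/∂t(t,s) ds = u(t,x) + f(t,x)` on
`[0,∞) × [0,1]`, and `u(0,x) − 3 ∫₀¹ x s u(0,s) ds = 0` on `[0,1]`, then `u` is given
by the explicit formula `uSol f`. -/
theorem stmt_6 (f ft u ut : ℝ → ℝ → ℝ)
    (hf : ContinuousOn (fun p : ℝ × ℝ => f p.1 p.2) (Set.Ici 0 ×ˢ Set.Icc 0 1))
    (hft : ∀ x ∈ Set.Icc (0:ℝ) 1, ∀ t ∈ Set.Ici (0:ℝ),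
      HasDerivWithinAt (fun τ => f τ x) (ft t x) (Set.Ici 0) t)
    (hftc : ContinuousOn (fun p : ℝ × ℝ => ft p.1 p.2) (Set.Ici 0 ×ˢ Set.Icc 0 1))
    (hu : ContinuousOn (fun p : ℝ × ℝ => u p.1 p.2) (Set.Ici 0 ×ˢ Set.Icc 0 1))
    (hut : ∀ x ∈ Set.Icc (0:ℝ) 1, ∀ t ∈ Set.Ici (0:ℝ),
      HasDerivWithinAt (fun τ => u τ x) (ut t x) (Set.Ici 0) t)
    (hutc : ContinuousOn (fun p : ℝ × ℝ => ut p.1 p.2) (Set.Ici 0 ×ˢ Set.Icc 0 1))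
    (heq : ∀ t ∈ Set.Ici (0:ℝ), ∀ x ∈ Set.Icc (0:ℝ) 1,
      ut t x - 3 * x * ∫ s in (0:ℝ)..1, s * ut t s = u t x + f t x)
    (hinit : ∀ x ∈ Set.Icc (0:ℝ) 1,
      u 0 x - 3 * x * ∫ s in (0:ℝ)..1, s * u 0 s = 0) :
    ∀ t ∈ Set.Ici (0:ℝ), ∀ x ∈ Set.Icc (0:ℝ) 1, u t x = uSol f t x :=
  stmt_6_general f u ut hf hu hut hutc heq hinit
end

section
/- Let f : [0,∞) × [0,1] → ℝ be continuous. If u : [0,∞) × [0,1] → ℝ has continuous partial derivatives ∂u/∂t and ∂²u/∂t², satisfies ∂²u/∂t²(t,x) − 3 ∫₀¹ x s ∂²u/∂t²(t,s) ds = ∂u/∂t(t,x) + f(t,x) for all t ≥ 0 and x ∈ [0,1], and satisfies the standard Cauchy condition ∂u/∂t(0,x) = 0 for all x ∈ [0,1], then necessarily ∫₀¹ s f(0,s) ds = 0. Hence the Cauchy problem with the standard conditions u|_{t=0} = 0 and ∂u/∂t|_{t=0} = 0 is unsolvable for arbitrary continuous f. -/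
/-- If `u` solves the second-order degenerate equation of Example 3 and satisfies the
standard Cauchy condition `∂u/∂t(0,x) = 0` on `[0,1]`, then necessarily
`∫₀¹ s f(0,s) ds = 0`. Hence the Cauchy problem with the standard conditions
`u|_{t=0} = 0`, `∂u/∂t|_{t=0} = 0` is unsolvable for arbitrary continuous `f`. -/
theorem stmt_10 (f u ut utt : ℝ → ℝ → ℝ)
    (hf : ContinuousOn (fun p : ℝ × ℝ => f p.1 p.2) (Set.Ici 0 ×ˢ Set.Icc 0 1))
    (hut : ∀ x ∈ Set.Icc (0:ℝ) 1, ∀ t ∈ Set.Ici (0:ℝ),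
      HasDerivWithinAt (fun τ => u τ x) (ut t x) (Set.Ici 0) t)
    (hutt : ∀ x ∈ Set.Icc (0:ℝ) 1, ∀ t ∈ Set.Ici (0:ℝ),
      HasDerivWithinAt (fun τ => ut τ x) (utt t x) (Set.Ici 0) t)
    (hutc : ContinuousOn (fun p : ℝ × ℝ => ut p.1 p.2) (Set.Ici 0 ×ˢ Set.Icc 0 1))
    (huttc : ContinuousOn (fun p : ℝ × ℝ => utt p.1 p.2) (Set.Ici 0 ×ˢ Set.Icc 0 1))
    (heq : ∀ t ∈ Set.Ici (0:ℝ), ∀ x ∈ Set.Icc (0:ℝ) 1,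
      utt t x - 3 * x * ∫ s in (0:ℝ)..1, s * utt t s = ut t x + f t x)
    (hinit : ∀ x ∈ Set.Icc (0:ℝ) 1, ut 0 x = 0) :
    ∫ s in (0:ℝ)..1, s * f 0 s = 0 := by
  set I : ℝ := ∫ s in (0:ℝ)..1, s * utt 0 s with hI
  have hmaps : Set.MapsTo (fun x : ℝ => ((0:ℝ), x)) (Set.Icc 0 1)
      (Set.Ici 0 ×ˢ Set.Icc 0 1) := fun x hx => ⟨Set.self_mem_Ici, hx⟩
  have hcont0 : ContinuousOn (fun x : ℝ => ((0:ℝ), x)) (Set.Icc 0 1) :=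
    (continuous_const.prodMk continuous_id).continuousOn
  have hg : ContinuousOn (fun x => utt 0 x) (Set.Icc 0 1) :=
    huttc.comp hcont0 hmaps
  have hkey : ∀ x ∈ Set.Icc (0:ℝ) 1, f 0 x = utt 0 x - 3 * x * I := by
    intro x hx
    have h := heq 0 Set.self_mem_Ici x hx
    rw [hinit x hx, zero_add] at h
    linarith [h]
  have hIcc : Set.uIcc (0:ℝ) 1 = Set.Icc 0 1 := by
    rw [Set.uIcc_of_le]; norm_num
  have hcongr : ∫ s in (0:ℝ)..1, s * f 0 s
      = ∫ s in (0:ℝ)..1, s * (utt 0 s - 3 * s * I) := by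
    apply intervalIntegral.integral_congr
    intro s hs
    rw [hIcc] at hs
    dsimp only
    rw [hkey s hs]
  have hint1 : IntervalIntegrable (fun s => s * utt 0 s) MeasureTheory.volume 0 1 := by
    apply ContinuousOn.intervalIntegrable
    rw [hIcc]
    exact continuousOn_id.mul hg
  have hint2 : IntervalIntegrable (fun s => s * (3 * s * I)) MeasureTheory.volume 0 1 := by
    apply Continuous.intervalIntegrable
    continuity
  have hsplit : ∫ s in (0:ℝ)..1, s * (utt 0 s - 3 * s * I)
      = (∫ s in (0:ℝ)..1, s * utt 0 s) - ∫ s in (0:ℝ)..1, s * (3 * s * I) := by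
    rw [← intervalIntegral.integral_sub hint1 hint2]
    congr 1; ext s; ring
  have hsq : ∫ s in (0:ℝ)..1, s * (3 * s * I) = I := by
    have : (fun s : ℝ => s * (3 * s * I)) = fun s => (3 * I) * s ^ 2 := by
      ext s; ring
    rw [this, intervalIntegral.integral_const_mul, integral_pow]
    push_cast
    ring
  rw [hcongr, hsplit, hsq, ← hI, sub_self]
end
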